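/- arXiv:math/0507451 — 6 statements merged into one kernel-verified Lean document; each statement's English description precedes it below -/
import Mathlib

section
/- Let V be a complex vector space with a quaternionic structure j, and let T be a finite set of one-dimensional complex subspaces of V such that for every W ∈ T, the image subspace j(W) also belongs to T. Then the cardinality of T is even. (This is the key step in the proof that a quaternionic projective variety of odd complex codimension has even degree.) -/
/-- A finite set of complex lines in `V` that is closed under the
involution induced by a quaternionic structure `j` has even cardinality. -/
theorem even_card_of_j_closed_family_of_lines
    (V : Type*) [AddCommGroup V] [Module ℂ V]
    (j : V → V)
    (hadd : ∀ v w : V, j (v + w) = j v + j w)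
    (hsmul : ∀ (a : ℂ) (v : V), j (a • v) = (starRingEnd ℂ a) • j v)
    (hsq : ∀ v : V, j (j v) = -v)
    (T : Finset (Submodule ℂ V))
    (hdim : ∀ W ∈ T, Module.finrank ℂ W = 1)
    (hclosed : ∀ W ∈ T, ∃ W' ∈ T, (W' : Set V) = j '' (W : Set V)) :
    Even T.card := by
  classical
  have hj0 : j 0 = 0 := by
    have := hsmul 0 0
    simpa using this
  -- the image of a submodule under `j` is a submodule
  let g : Submodule ℂ V → Submodule ℂ V := fun W =>
    { carrier := j '' (W : Set V)
      zero_mem' := ⟨0, W.zero_mem, hj0⟩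
      add_mem' := by
        rintro a b ⟨x, hx, rfl⟩ ⟨y, hy, rfl⟩
        exact ⟨x + y, W.add_mem hx hy, hadd x y⟩
      smul_mem' := by
        rintro c a ⟨x, hx, rfl⟩
        refine ⟨(starRingEnd ℂ c) • x, W.smul_mem _ hx, ?_⟩
        rw [hsmul]
        simp }
  have hg_coe : ∀ W, ((g W : Submodule ℂ V) : Set V) = j '' (W : Set V) := fun _ => rfl
  have hg_mem : ∀ W ∈ T, g W ∈ T := by
    intro W hW
    obtain ⟨W', hW', hW'eq⟩ := hclosed W hW
    have : W' = g W := SetLike.coe_injective (by rw [hg_coe, hW'eq])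
    rwa [← this]
  have hg_invol : ∀ W : Submodule ℂ V, g (g W) = W := by
    intro W
    apply SetLike.coe_injective
    rw [hg_coe, hg_coe]
    ext v
    constructor
    · rintro ⟨_, ⟨x, hx, rfl⟩, rfl⟩
      rw [hsq]
      exact W.neg_mem hx
    · intro hv
      exact ⟨j (-v), ⟨-v, W.neg_mem hv, rfl⟩, by rw [hsq]; simp⟩
  have hg_ne : ∀ W ∈ T, g W ≠ W := by
    intro W hW hWeq
    -- pick a nonzero vector in W
    have : Nontrivial W := Module.nontrivial_of_finrank_pos (R := ℂ)
      (by rw [hdim W hW]; norm_num)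
    obtain ⟨v, hv0⟩ := exists_ne (0 : W)
    have hvne : (v : V) ≠ 0 := fun h => hv0 (Subtype.ext h)
    -- j v ∈ W
    have hjv : j (v : V) ∈ W := by
      have : j (v : V) ∈ g W := ⟨v, v.2, rfl⟩
      rwa [hWeq] at this
    obtain ⟨a, ha⟩ := (finrank_eq_one_iff_of_nonzero' v hv0).mp (hdim W hW) ⟨j v, hjv⟩
    have ha' : a • (v : V) = j (v : V) := congrArg Subtype.val ha
    have hcontr : (starRingEnd ℂ a * a) • (v : V) = -(v : V) := by
      have := hsq (v : V)
      rw [← ha', hsmul, ← ha', smul_smul] at this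
      exact this
    have : (starRingEnd ℂ a * a + 1) • (v : V) = 0 := by
      rw [add_smul, hcontr, one_smul]; simp
    have hcoef : starRingEnd ℂ a * a + 1 = 0 := by
      by_contra h
      exact hvne (by simpa [h] using (smul_eq_zero.mp this).resolve_left h)
    have : (Complex.normSq a : ℂ) + 1 = 0 := by
      rw [← Complex.normSq_eq_conj_mul_self] at hcoef
      exact hcoef
    have hre : Complex.normSq a + 1 = 0 := by
      have := congrArg Complex.re this
      simpa using this
    nlinarith [Complex.normSq_nonneg a]
  -- sum of 1's in ZMod 2 vanishes
  have hsum : ∑ _x ∈ T, (1 : ZMod 2) = 0 :=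
    Finset.sum_involution (fun W _ => g W)
      (fun W hW => by decide)
      (fun W hW _ => hg_ne W hW)
      (fun W hW => hg_mem W hW)
      (fun W hW => hg_invol W)
  rw [Finset.sum_const, nsmul_eq_mul, mul_one] at hsum
  have : (2 : ℕ) ∣ T.card := (ZMod.natCast_eq_zero_iff _ _).mp hsum
  exact even_iff_two_dvd.mpr this
end

section
/- Let V be a complex vector space with a quaternionic structure j. Let c be a finitely supported integer-valued function on the set of one-dimensional complex subspaces of V such that c(j(W)) = c(W) for every one-dimensional subspace W. Then the total degree Σ_W c(W) is an even integer. (Thus every j-invariant algebraic 0-cycle on ℙ(V) has even degree.) -/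
/-- Every `j`-invariant finitely supported integer-valued function on the
set of complex lines of `V` (i.e. every `j`-invariant algebraic `0`-cycle on `ℙ(V)`) has
even total degree.  Here `σ` is the map induced by `j` on lines, characterized by
`σ W = j '' W`. -/
theorem even_degree_of_quaternionic_zero_cycle
    (V : Type*) [AddCommGroup V] [Module ℂ V]
    (j : V → V)
    (hadd : ∀ v w : V, j (v + w) = j v + j w)
    (hsmul : ∀ (a : ℂ) (v : V), j (a • v) = (starRingEnd ℂ a) • j v)
    (hsq : ∀ v : V, j (j v) = -v)
    (σ : {W : Submodule ℂ V // Module.finrank ℂ W = 1} →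
         {W : Submodule ℂ V // Module.finrank ℂ W = 1})
    (hσ : ∀ W, ((σ W : Submodule ℂ V) : Set V) = j '' ((W : Submodule ℂ V) : Set V))
    (c : {W : Submodule ℂ V // Module.finrank ℂ W = 1} →₀ ℤ)
    (hc : ∀ W, c (σ W) = c W) :
    Even (∑ W ∈ c.support, c W) := by
  classical
  have hσσ : ∀ W, σ (σ W) = W := by
    intro W
    apply Subtype.ext
    apply SetLike.coe_injective
    rw [hσ, hσ]
    ext x
    constructor
    · rintro ⟨y, ⟨z, hz, rfl⟩, rfl⟩
      rw [hsq]
      exact (W : Submodule ℂ V).neg_mem hz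
    · intro hx
      exact ⟨j (-x), ⟨-x, (W : Submodule ℂ V).neg_mem hx, rfl⟩, by rw [hsq, neg_neg]⟩
  have hfix : ∀ W, σ W ≠ W := by
    intro W hW
    obtain ⟨v, hv0, hvspan⟩ := finrank_eq_one_iff'.mp W.2
    have hjv : j (v : V) ∈ (W : Submodule ℂ V) := by
      have : j (v : V) ∈ ((σ W : Submodule ℂ V) : Set V) := by
        rw [hσ]; exact ⟨v, v.2, rfl⟩
      rwa [hW] at this
    obtain ⟨a, ha⟩ := hvspan ⟨j (v : V), hjv⟩
    have ha' : a • (v : V) = j (v : V) := congrArg Subtype.val ha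
    have key : j (j (v : V)) = (starRingEnd ℂ a * a) • (v : V) := by
      rw [← ha', hsmul, ← ha', smul_smul]
    rw [hsq] at key
    have hv0' : (v : V) ≠ 0 := fun h => hv0 (Subtype.ext h)
    have : (starRingEnd ℂ a * a + 1) • (v : V) = 0 := by
      rw [add_smul, one_smul, ← key, neg_add_cancel]
    have hcoef : starRingEnd ℂ a * a + 1 = 0 := by
      by_contra hne
      exact hv0' (by simpa [hne] using (smul_eq_zero.mp this))
    have : (Complex.normSq a : ℂ) + 1 = 0 := by
      rw [mul_comm, Complex.mul_conj] at hcoef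
      exact hcoef
    have hre : Complex.normSq a + 1 = 0 := by
      have := congrArg Complex.re this
      simpa using this
    nlinarith [Complex.normSq_nonneg a]
  have hz : ((∑ W ∈ c.support, c W : ℤ) : ZMod 2) = 0 := by
    push_cast
    refine Finset.sum_involution (fun W _ => σ W) ?_ ?_ ?_ ?_
    · intro a ha
      rw [hc]
      exact CharTwo.add_self_eq_zero _
    · intro a ha h
      exact hfix a
    · intro a ha
      rw [Finsupp.mem_support_iff] at *
      rw [hc]; exact ha
    · intro a ha
      exact hσσ a
  obtain ⟨k, hk⟩ := (ZMod.intCast_zmod_eq_zero_iff_dvd _ 2).mp hz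
  exact ⟨k, by omega⟩
end

section
/- Let S be a type and σ : S → S a map with σ ∘ σ = id. Let Inv be the additive group of finitely supported functions c : S → ℤ satisfying c(σ(s)) = c(s) for all s, and let Av ⊆ Inv be the subgroup of all functions of the form c + c ∘ σ where c : S → ℤ is finitely supported. Then the quotient group Inv / Av is isomorphic as an additive group to the group of finitely supported functions from the fixed-point set {s : S | σ(s) = s} to ℤ/2. (This identifies the reduced group of quaternionic cycles, the quotient of j-fixed cycles by averaged cycles, with the ℤ/2-vector space freely generated by the j-invariant irreducible subvarieties.) -/
/-- The additive group of finitely supported integer-valued functions on `S` that are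
invariant under `σ`. -/
noncomputable def invariantCycles {S : Type*} (σ : S → S) : AddSubgroup (S →₀ ℤ) where
  carrier := {c | ∀ s, c (σ s) = c s}
  add_mem' := by
    intro a b ha hb s
    simp only [Finsupp.add_apply, ha s, hb s]
  zero_mem' := by intro s; simp
  neg_mem' := by
    intro a ha s
    simp only [Finsupp.neg_apply, ha s]

/-- The additive group of averaged cycles: finitely supported functions of the form
`c' + c' ∘ σ`. -/
noncomputable def averagedCycles {S : Type*} (σ : S → S) : AddSubgroup (S →₀ ℤ) where
  carrier := {c | ∃ c' : S →₀ ℤ, ∀ s, c s = c' s + c' (σ s)}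
  add_mem' := by
    rintro a b ⟨ca, hca⟩ ⟨cb, hcb⟩
    refine ⟨ca + cb, fun s => ?_⟩
    simp only [Finsupp.add_apply, hca s, hcb s]
    ring
  zero_mem' := ⟨0, fun s => by simp⟩
  neg_mem' := by
    rintro a ⟨ca, hca⟩
    refine ⟨-ca, fun s => ?_⟩
    simp only [Finsupp.neg_apply, hca s]
    ring

/-!
Reducing the values on fixed points modulo 2 is a surjective homomorphism from invariant
cycles onto `{s // σ s = s} →₀ ZMod 2`. Its kernel consists of the invariant cycles that are
even on fixed points, and such a `c` is the average of the function equal to `c / 2` on fixed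
points, to `c` on one chosen point of each free orbit `{s, σ s}`, and to `0` on the other.
-/

namespace InvariantCycles

variable {S : Type*} {σ : S → S}

theorem mem_invariantCycles_of_support_subset_fixed (hσ : Function.Injective σ) {c : S →₀ ℤ}
    (hc : ↑c.support ⊆ {s | σ s = s}) : c ∈ invariantCycles σ := by
  intro s
  by_cases hs : σ s = s
  · rw [hs]
  have hs' : σ (σ s) ≠ σ s := fun h => hs (hσ h)
  rw [Finsupp.notMem_support_iff.mp fun h => hs' (hc h),
    Finsupp.notMem_support_iff.mp fun h => hs (hc h)]

theorem even_of_mem_averagedCycles {c : S →₀ ℤ} (hc : c ∈ averagedCycles σ) {s : S}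
    (hs : σ s = s) : Even (c s) := by
  obtain ⟨c', hc'⟩ := hc
  exact ⟨c' s, by rw [hc' s, hs]⟩

theorem mem_averagedCycles_of_even (hσ : Function.Involutive σ) {c : S →₀ ℤ}
    (hc : c ∈ invariantCycles σ) (heven : ∀ s, σ s = s → Even (c s)) :
    c ∈ averagedCycles σ := by
  classical
  let _ : LinearOrder S := IsWellOrder.linearOrder WellOrderingRel
  let half : S → ℤ := fun s => if σ s = s then c s / 2 else if s < σ s then c s else 0
  have half_support : ∀ s, half s ≠ 0 → s ∈ c.support := by
    intro s hs
    rw [Finsupp.mem_support_iff]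
    intro h0
    simp [half, h0] at hs
  refine ⟨Finsupp.onFinset c.support half half_support, fun s => ?_⟩
  simp only [Finsupp.onFinset_apply, half]
  by_cases hfix : σ s = s
  · obtain ⟨k, hk⟩ := heven s hfix
    simp only [hfix, if_true, hk]
    omega
  have hfix' : σ (σ s) ≠ σ s := by rw [hσ s]; exact Ne.symm hfix
  rw [if_neg hfix, if_neg hfix', hσ s]
  rcases lt_or_gt_of_ne (Ne.symm hfix) with hlt | hgt
  · rw [if_neg hlt.not_gt, if_pos hlt, add_zero]
  · rw [if_pos hgt, if_neg hgt.not_gt, zero_add, hc s]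

variable (σ) in
noncomputable def fixedParity : invariantCycles σ →+ ({s : S // σ s = s} →₀ ZMod 2) :=
  (Finsupp.mapRange.addMonoidHom (Int.castAddHom (ZMod 2))).comp
    ((Finsupp.subtypeDomainAddMonoidHom (M := ℤ) (p := fun s => σ s = s)).comp
      (invariantCycles σ).subtype)

@[simp]
theorem fixedParity_apply (c : invariantCycles σ) (s : {s : S // σ s = s}) :
    fixedParity σ c s = ((c : S →₀ ℤ) s : ZMod 2) :=
  rfl

theorem fixedParity_surjective (hσ : Function.Injective σ) :
    Function.Surjective (fixedParity σ) := by
  classical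
  intro f
  let lift : S →₀ ℤ := (f.mapRange (fun x => (x.val : ℤ)) (by simp)).extendDomain
  refine ⟨⟨lift, mem_invariantCycles_of_support_subset_fixed hσ
    (Finsupp.support_extendDomain_subset _)⟩, Finsupp.ext fun s => ?_⟩
  simp [lift, s.2]

theorem mem_ker_fixedParity {c : invariantCycles σ} :
    c ∈ (fixedParity σ).ker ↔ ∀ s, σ s = s → Even ((c : S →₀ ℤ) s) := by
  simp [AddMonoidHom.mem_ker, Finsupp.ext_iff, ZMod.intCast_eq_zero_iff_even]

theorem averagedCycles_addSubgroupOf_eq_ker (hσ : Function.Involutive σ) :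
    (averagedCycles σ).addSubgroupOf (invariantCycles σ) = (fixedParity σ).ker := by
  ext c
  rw [AddSubgroup.mem_addSubgroupOf, mem_ker_fixedParity]
  exact ⟨fun hc _ => even_of_mem_averagedCycles hc, mem_averagedCycles_of_even hσ c.2⟩

end InvariantCycles

/-- For an involution `σ` of a set `S`, the quotient of the group of
invariant finitely supported integer-valued functions by the subgroup of averaged ones is
isomorphic to the group of finitely supported `ℤ/2`-valued functions on the fixed-point
set of `σ`. -/
theorem invariant_mod_averaged_iso
    (S : Type*) (σ : S → S) (h : σ ∘ σ = id) :
    Nonempty ((↥(invariantCycles σ) ⧸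
        ((averagedCycles σ).addSubgroupOf (invariantCycles σ))) ≃+
      ({s : S // σ s = s} →₀ ZMod 2)) := by
  have hσ : Function.Involutive σ := congrFun h
  rw [InvariantCycles.averagedCycles_addSubgroupOf_eq_ker hσ]
  exact ⟨QuotientAddGroup.quotientKerEquivOfSurjective _
    (InvariantCycles.fixedParity_surjective hσ.injective)⟩
end

section
/- Let S be a type and σ : S → S a map with σ ∘ σ = id that has no fixed points (σ(s) ≠ s for all s). Then every finitely supported invariant function is averaged: for every finitely supported c : S → ℤ with c(σ(s)) = c(s) for all s, there exists a finitely supported c' : S → ℤ with c = c' + c' ∘ σ. (This is why the reduced group of quaternionic cycles of odd codimension is a single point.) -/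
/-! Choose a linear order on `S` (a well-order exists on any type). Since `σ` has no fixed
points, every orbit `{s, σ s}` has exactly two elements, and keeping the values of `c` at the
smaller element of each orbit gives `c'`. -/

theorem Finsupp.exists_add_comp_eq_of_involutive {S M : Type*} [LinearOrder S] [AddZeroClass M]
    {σ : S → S} (hσ : Function.Involutive σ) (hfree : ∀ s, σ s ≠ s) (c : S →₀ M)
    (hc : ∀ s, c (σ s) = c s) :
    ∃ c' : S →₀ M, ∀ s, c s = c' s + c' (σ s) := by
  refine ⟨c.filter (fun s => s < σ s), fun s => ?_⟩
  rw [Finsupp.filter_apply, Finsupp.filter_apply, hσ s, hc]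
  rcases (hfree s).lt_or_gt with hlt | hgt
  · rw [if_neg hlt.not_gt, if_pos hlt, zero_add]
  · rw [if_pos hgt, if_neg hgt.not_gt, add_zero]

/-- If an involution `σ` of `S` has no fixed points, then every
finitely supported `σ`-invariant integer-valued function on `S` is averaged, i.e. of the
form `c' + c' ∘ σ`. -/
theorem invariant_is_averaged_of_free
    (S : Type*) (σ : S → S) (h : σ ∘ σ = id) (hfree : ∀ s, σ s ≠ s)
    (c : S →₀ ℤ) (hc : ∀ s, c (σ s) = c s) :
    ∃ c' : S →₀ ℤ, ∀ s, c s = c' s + c' (σ s) := by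
  let _ : LinearOrder S := IsWellOrder.linearOrder WellOrderingRel
  exact Finsupp.exists_add_comp_eq_of_involutive (σ := σ) (congrFun h) hfree c hc
end

section
/- Let S be a type and σ : S → S a map with σ ∘ σ = id having exactly one fixed point. Let Inv be the additive group of finitely supported functions c : S → ℤ satisfying c(σ(s)) = c(s) for all s, and let Av ⊆ Inv be the subgroup of all functions of the form c + c ∘ σ with c finitely supported. Then Inv / Av is isomorphic as an additive group to ℤ/2. (This computes Z₀(Q(ℍ^q))^fixed / Z₀(Q(ℍ^q))^av = ℤ/2, since the quaternionic involution acts freely outside one point of Q(ℍ^q).) -/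
/-- If an involution `σ` of `S` has exactly one fixed point, then the
quotient of invariant finitely supported integer-valued cycles by averaged ones is `ℤ/2`. -/
theorem invariant_mod_averaged_iso_zmod_two_of_unique_fixed_point
    (S : Type*) (σ : S → S) (h : σ ∘ σ = id) (hfix : ∃! s : S, σ s = s) :
    Nonempty ((↥(invariantCycles σ) ⧸
        ((averagedCycles σ).addSubgroupOf (invariantCycles σ))) ≃+ ZMod 2) := by
  classical
  obtain ⟨s₀, hs₀, huniq⟩ := hfix
  have hσσ : ∀ s, σ (σ s) = s := fun s => congrFun h s
  let st : Setoid S := ⟨fun s t => t = s ∨ t = σ s,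
    ⟨fun s => Or.inl rfl,
     by rintro s t (rfl | rfl) <;> simp [hσσ],
     by rintro s t u (rfl | rfl) (rfl | rfl) <;> simp [hσσ]⟩⟩
  let r : S → S := fun s => (Quotient.mk st s).out
  have hr : ∀ s, r s = s ∨ r s = σ s := by
    intro s
    rcases Quotient.mk_out (s := st) s with h' | h'
    · exact Or.inl h'.symm
    · have e2 := congrArg σ h'
      rw [hσσ] at e2
      exact Or.inr e2.symm
  have hrσ : ∀ s, r (σ s) = r s := by
    intro s
    have : Quotient.mk st (σ s) = Quotient.mk st s := Quotient.sound (Or.inr (hσσ s).symm)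
    simp only [r, this]
  let φ : ↥(invariantCycles σ) →+ ZMod 2 := AddMonoidHom.mk'
    (fun c => ((c : S →₀ ℤ) s₀ : ZMod 2)) (by intro a b; push_cast [Finsupp.add_apply]; ring)
  have hsurj : Function.Surjective φ := by
    intro x
    have hmem : Finsupp.single s₀ (1 : ℤ) ∈ invariantCycles σ := by
      intro s
      by_cases hs : s = s₀
      · subst hs; rw [hs₀]
      · rw [Finsupp.single_apply, Finsupp.single_apply, if_neg, if_neg]
        · exact fun e => hs e.symm
        · intro e
          apply hs
          have e2 := congrArg σ e
          rw [hs₀, hσσ] at e2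
          exact e2.symm
    refine ⟨(x.val : ℤ) • ⟨_, hmem⟩, ?_⟩
    show (((x.val : ℤ) • Finsupp.single s₀ (1:ℤ)) s₀ : ZMod 2) = x
    simp [Finsupp.smul_apply, Finsupp.single_apply, ZMod.natCast_val, ZMod.intCast_cast,
      ZMod.cast_id]
  have hker : φ.ker = (averagedCycles σ).addSubgroupOf (invariantCycles σ) := by
    ext c
    simp only [AddSubgroup.mem_addSubgroupOf, AddMonoidHom.mem_ker]
    constructor
    · intro hc
      have heven : (2 : ℤ) ∣ (c : S →₀ ℤ) s₀ := by
        have := (ZMod.intCast_zmod_eq_zero_iff_dvd ((c : S →₀ ℤ) s₀) 2).mp hc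
        exact_mod_cast this
      obtain ⟨m, hm⟩ := heven
      set f : S → ℤ := fun s => if s = s₀ then m else if r s = s then (c : S →₀ ℤ) s else 0
        with hf
      have hfin : (Function.support f).Finite := by
        apply Set.Finite.subset (c : S →₀ ℤ).support.finite_toSet
        intro s hs
        simp only [Function.mem_support, hf] at hs
        rw [Finset.mem_coe, Finsupp.mem_support_iff]
        by_cases h1 : s = s₀
        · subst h1
          rw [if_pos rfl] at hs
          omega
        · rw [if_neg h1] at hs
          by_cases h2 : r s = s
          · rwa [if_pos h2] at hs
          · rw [if_neg h2] at hs; exact absurd rfl hs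
      refine ⟨Finsupp.ofSupportFinite f hfin, fun s => ?_⟩
      have hap : ∀ t, Finsupp.ofSupportFinite f hfin t = f t := fun t => rfl
      rw [hap, hap]
      by_cases h1 : s = s₀
      · subst h1
        simp only [hf, hs₀, if_pos rfl]
        omega
      · have h2 : σ s ≠ s₀ := by
          intro e
          apply h1
          have e2 := congrArg σ e
          rw [hσσ, hs₀] at e2
          exact e2
        have h3 : σ s ≠ s := fun e => h1 (huniq s e)
        simp only [hf, if_neg h1, if_neg h2, hrσ]
        rcases hr s with h4 | h4
        · rw [if_pos h4, if_neg (fun e => h3 (e.symm.trans h4))]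
          ring
        · rw [if_neg (fun e => h3 (h4.symm.trans e)), if_pos h4, c.2 s]
          ring
    · rintro ⟨c', hc'⟩
      show (((c : S →₀ ℤ) s₀ : ZMod 2) = 0)
      rw [hc' s₀, hs₀]
      push_cast
      rw [← two_mul, show (2 : ZMod 2) = 0 by decide, zero_mul]
  exact ⟨(QuotientAddGroup.quotientAddEquivOfEq hker.symm).trans
    (QuotientAddGroup.quotientKerEquivOfSurjective φ hsurj)⟩
end

section
/- Let A be an additive abelian group fitting in a short exact sequence 0 → ℤ → A → ℤ/4 → 0, i.e. there are group homomorphisms f : ℤ → A injective and g : A → ℤ/4 surjective with range f = ker g. If the quotient A / 2A (the quotient of A by the subgroup {a + a : a ∈ A}) has exactly two elements, then A is isomorphic to ℤ. (This is the extension argument used to compute H_{4k}(Q(ℍ^q)/ℤ₂; ℤ) = ℤ.) -/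
/-- The subgroup `2A = {a + a : a ∈ A}` of an additive abelian group `A`. -/
def doubleSubgroup (A : Type*) [AddCommGroup A] : AddSubgroup A where
  carrier := {x | ∃ a : A, x = a + a}
  add_mem' := by
    rintro x y ⟨a, rfl⟩ ⟨b, rfl⟩
    exact ⟨a + b, by abel⟩
  zero_mem' := ⟨0, by simp⟩
  neg_mem' := by
    rintro x ⟨a, rfl⟩
    exact ⟨-a, by abel⟩

/-- If an abelian group `A` sits in a short exact sequence
`0 → ℤ → A → ℤ/4 → 0` and `A / 2A` has exactly two elements, then `A ≅ ℤ`. -/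
theorem extension_of_zmod_four_by_int_with_small_mod_two
    (A : Type*) [AddCommGroup A]
    (f : ℤ →+ A) (g : A →+ ZMod 4)
    (hf : Function.Injective f) (hg : Function.Surjective g)
    (hexact : f.range = g.ker)
    (hcard : Nat.card (A ⧸ doubleSubgroup A) = 2) :
    Nonempty (A ≃+ ℤ) := by
  classical
  obtain ⟨x, hx⟩ := hg 1
  set t := f 1 with ht
  have hft : ∀ n : ℤ, f n = n • t := by
    intro n; rw [ht, ← map_zsmul]; simp
  have hgt : g t = 0 := by
    have : t ∈ g.ker := hexact ▸ ⟨1, rfl⟩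
    exact this
  have h4x : (4 : ℤ) • x ∈ g.ker := by
    simp only [AddMonoidHom.mem_ker, map_zsmul, hx]
    decide
  rw [← hexact] at h4x
  obtain ⟨k, hk⟩ := h4x
  have h4xkt : (4 : ℤ) • x = k • t := by rw [← hk, hft]
  have hnotdouble : ∀ u : A, g u = 1 → u ∉ doubleSubgroup A := by
    rintro u hu ⟨a, rfl⟩
    rw [map_add] at hu
    exact absurd hu ((by decide : ∀ v : ZMod 4, v + v ≠ 1) (g a))
  have htd : t ∈ doubleSubgroup A := by
    obtain ⟨u, v, huv, hcover⟩ := Nat.card_eq_two_iff.mp hcard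
    have mem : ∀ q : A ⧸ doubleSubgroup A, q = u ∨ q = v := fun q => by
      have : q ∈ ({u, v} : Set (A ⧸ doubleSubgroup A)) := hcover ▸ Set.mem_univ q
      simpa using this
    have hne0 : ((x : A ⧸ doubleSubgroup A)) ≠ 0 := by
      rw [Ne, QuotientAddGroup.eq_zero_iff]
      exact hnotdouble x hx
    have hnex : ((t : A ⧸ doubleSubgroup A)) ≠ (x : A ⧸ doubleSubgroup A) := by
      intro h
      have hmem : t - x ∈ doubleSubgroup A := by
        rw [← QuotientAddGroup.eq_zero_iff, QuotientAddGroup.mk_sub, h, sub_self]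
      obtain ⟨a, ha⟩ := hmem
      have h2 : g (t - x) = g a + g a := by rw [ha, map_add]
      rw [map_sub, hgt, hx] at h2
      exact absurd h2.symm ((by decide : ∀ v : ZMod 4, v + v ≠ 0 - 1) (g a))
    have h0 : ((t : A ⧸ doubleSubgroup A)) = 0 := by
      rcases mem 0 with h1 | h1 <;> rcases mem ((x : A) : A ⧸ doubleSubgroup A) with h2 | h2 <;>
        rcases mem ((t : A) : A ⧸ doubleSubgroup A) with h3 | h3
      · exact absurd (h2.trans h1.symm) hne0
      · exact absurd (h2.trans h1.symm) hne0
      · exact h3.trans h1.symm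
      · exact absurd (h3.trans h2.symm) hnex
      · exact absurd (h3.trans h2.symm) hnex
      · exact h3.trans h1.symm
      · exact absurd (h2.trans h1.symm) hne0
      · exact absurd (h2.trans h1.symm) hne0
    rwa [QuotientAddGroup.eq_zero_iff] at h0
  obtain ⟨a, ha⟩ := htd
  have hga2 : g a + g a = 0 := by rw [← map_add, ← ha, hgt]
  have hga : g a = 0 ∨ g a = 2 :=
    (by decide : ∀ v : ZMod 4, v + v = 0 → v = 0 ∨ v = 2) (g a) hga2
  have hkodd : ∃ j : ℤ, k = 1 - 2 * j := by
    rcases hga with h | h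
    · have : a ∈ f.range := hexact ▸ h
      obtain ⟨j, hj⟩ := this
      have heq : f (j + j) = f 1 := by rw [map_add, hj, ← ha, ht]
      have := hf heq
      omega
    · have : a - (2 : ℤ) • x ∈ f.range := by
        rw [hexact]
        show g (a - (2:ℤ) • x) = 0
        rw [map_sub, map_zsmul, hx, h]
        decide
      obtain ⟨j, hj⟩ := this
      have key : f (k + 2 * j) = f 1 := by
        rw [map_add, hk, ← ht]
        have h2j : f (2 * j) = a - (2:ℤ) • x + (a - (2:ℤ) • x) := by
          rw [two_mul, map_add, hj]
        rw [h2j, ha]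
        abel
      have := hf key
      exact ⟨j, by omega⟩
  obtain ⟨m, hm⟩ := hkodd
  set d : ℤ := -(m * m - m) with hd
  have hbez : k * k + 4 * d = 1 := by rw [hm, hd]; ring
  set z : A := k • x + d • t with hz
  have ht4 : t = (4 : ℤ) • z := by
    have h1 : (4:ℤ) • z = ((4:ℤ) * k) • x + ((4:ℤ) * d) • t := by
      rw [hz, smul_add, smul_smul, smul_smul]
    have h2 : ((4:ℤ) * k) • x = (k * k) • t := by
      rw [mul_comm, mul_smul, h4xkt, smul_smul]
    rw [h1, h2, ← add_smul, hbez, one_smul]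
  have hxk : x = k • z := by
    have h1 : k • z = (k * k) • x + (k * d) • t := by
      rw [hz, smul_add, smul_smul, smul_smul]
    have h2 : ((4:ℤ) * d) • x = (d * k) • t := by
      rw [mul_comm, mul_smul, h4xkt, smul_smul]
    have h3 : k * k = 1 - 4 * d := by linarith
    rw [h1, h3, sub_smul, one_smul, h2, mul_comm d k]
    abel
  let ψ : ℤ →+ A := AddMonoidHom.mk' (fun n => n • z) (fun p q => add_zsmul z p q)
  have hψ : ∀ n : ℤ, ψ n = n • z := fun n => rfl
  have hinj : Function.Injective ψ := by
    rw [injective_iff_map_eq_zero]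
    intro n hn
    rw [hψ] at hn
    have hfn : f n = 0 := by
      rw [hft, ht4, smul_smul, mul_comm, mul_smul, hn, smul_zero]
    have : f n = f 0 := by rw [hfn, map_zero]
    exact hf this
  have hsurj : Function.Surjective ψ := by
    intro b
    have hv : (((g b).val : ℤ) : ZMod 4) = g b := by
      push_cast [ZMod.natCast_val, ZMod.cast_id]
      rfl
    have hmem : b - ((g b).val : ℤ) • x ∈ f.range := by
      rw [hexact]
      show g (b - ((g b).val : ℤ) • x) = 0
      rw [map_sub, map_zsmul, hx, zsmul_eq_mul, mul_one, hv, sub_self]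
    obtain ⟨j, hj⟩ := hmem
    refine ⟨((g b).val : ℤ) * k + 4 * j, ?_⟩
    rw [hψ]
    have hsplit : ((((g b).val : ℤ)) * k + 4 * j) • z
        = ((g b).val : ℤ) • (k • z) + j • ((4:ℤ) • z) := by
      rw [add_smul, mul_smul, mul_comm (4:ℤ) j, mul_smul]
    rw [hsplit, ← hxk, ← ht4, ← hft, hj]
    abel
  exact ⟨(AddEquiv.ofBijective ψ ⟨hinj, hsurj⟩).symm⟩
end
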